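/- Let (X,T) be a TDS with metric d and μ a Borel probability measure on X. Then for every ε > 0, the upper Brin–Katok ε-entropy satisfies h̄_μ^{BK}(T, ε) ≤ 𝒫_μ(T, d, ε/10), where 𝒫_μ is the Katok-type packing ε-entropy of μ. -/

import Mathlib

open MeasureTheory Filter Set Metric Topology ENNReal

variable {X : Type*} [MetricSpace X]

/-- The `n`-th Bowen metric `d_n(x,y) = max_{0 ≤ j ≤ n-1} d(T^j x, T^j y)`. -/
noncomputable def bowenDist (T : X → X) (n : ℕ) (x y : X) : ℝ :=
  ⨆ j ∈ Finset.range n, dist (T^[j] x) (T^[j] y)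

/-- The open Bowen ball of order `n` and radius `ε`. -/
def bowenBall (T : X → X) (n : ℕ) (x : X) (ε : ℝ) : Set X :=
  {y | bowenDist T n x y < ε}

/-- The closed Bowen ball of order `n` and radius `ε`. -/
def bowenClosedBall (T : X → X) (n : ℕ) (x : X) (ε : ℝ) : Set X :=
  {y | bowenDist T n x y ≤ ε}

/-- `F` is `(n,ε)`-separated. -/
def IsBowenSeparated (T : X → X) (n : ℕ) (ε : ℝ) (F : Set X) : Prop :=
  ∀ x ∈ F, ∀ y ∈ F, x ≠ y → ε < bowenDist T n x y

/-- Maximal cardinality of an `(n,ε)`-separated subset of `Z`. -/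
noncomputable def sepNum (T : X → X) (n : ℕ) (ε : ℝ) (Z : Set X) : ℕ :=
  sSup {k | ∃ F : Finset X, ↑F ⊆ Z ∧ IsBowenSeparated T n ε ↑F ∧ F.card = k}

/-- A finite Borel measurable partition of `X`. -/
def IsMeasPartition [MeasurableSpace X] (P : Finset (Set X)) : Prop :=
  (∀ A ∈ P, MeasurableSet A) ∧ (∀ A ∈ P, ∀ B ∈ P, A ≠ B → Disjoint A B) ∧
    (⋃ A ∈ P, A) = Set.univ

/-- A finite open cover of `X`. -/
def IsOpenCover (U : Finset (Set X)) : Prop :=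
  (∀ A ∈ U, IsOpen A) ∧ (⋃ A ∈ U, A) = Set.univ

/-- The `n`-th join `⋁_{j=0}^{n-1} T^{-j} P` of a finite family of sets. -/
noncomputable def joinPart (T : X → X) (P : Finset (Set X)) (n : ℕ) : Finset (Set X) := by
  classical
  exact (Fintype.piFinset (fun _ : Fin n => P)).image
    (fun f => ⋂ j : Fin n, T^[(j : ℕ)] ⁻¹' f j)

/-- Static entropy of a finite partition. -/
noncomputable def partEntropy [MeasurableSpace X] (μ : Measure X) (P : Finset (Set X)) : ℝ :=
  ∑ A ∈ P, Real.negMulLog (μ A).toReal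

/-- Kolmogorov–Sinai entropy of `T` w.r.t. the partition `P`. -/
noncomputable def ksEntropyPart [MeasurableSpace X] (T : X → X) (μ : Measure X)
    (P : Finset (Set X)) : ℝ :=
  limsup (fun n => partEntropy μ (joinPart T P n) / n) atTop

/-- Kolmogorov–Sinai entropy of `(X,T,μ)`. -/
noncomputable def ksEntropy [MeasurableSpace X] (T : X → X) (μ : Measure X) : ℝ≥0∞ :=
  ⨆ (P : Finset (Set X)) (_ : IsMeasPartition P), ENNReal.ofReal (ksEntropyPart T μ P)

/-- `N_μ(V, c)`: the minimal cardinality of a subfamily of `V` whose union has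
measure at least `c`. -/
noncomputable def coverNum [MeasurableSpace X] (μ : Measure X) (V : Finset (Set X)) (c : ℝ) : ℕ :=
  sInf {k | ∃ W : Finset (Set X), W ⊆ V ∧ W.card = k ∧ ENNReal.ofReal c ≤ μ (⋃ A ∈ W, A)}

/-- Shapira's entropy of the open cover `U` at level `δ`. -/
noncomputable def shapiraEnt [MeasurableSpace X] (T : X → X) (μ : Measure X)
    (U : Finset (Set X)) (δ : ℝ) : ℝ :=
  limsup (fun n => Real.log (coverNum μ (joinPart T U n) δ) / n) atTop

/-- `R_μ^δ(T,n,ε)`: minimal number of Bowen `(n,ε)`-balls whose union has measure `> 1 - δ`. -/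
noncomputable def katokCovNum [MeasurableSpace X] (T : X → X) (μ : Measure X) (n : ℕ)
    (ε δ : ℝ) : ℕ :=
  sInf {k | ∃ E : Finset X, E.card = k ∧
    1 - ENNReal.ofReal δ < μ (⋃ x ∈ E, bowenBall T n x ε)}

/-- Upper Katok `ε`-entropy at level `δ`. -/
noncomputable def katokUpperδ [MeasurableSpace X] (T : X → X) (μ : Measure X) (ε δ : ℝ) : ℝ≥0∞ :=
  limsup (fun n => ENNReal.ofReal (Real.log (katokCovNum T μ n ε δ)) / n) atTop

/-- Lower Katok `ε`-entropy at level `δ`. -/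
noncomputable def katokLowerδ [MeasurableSpace X] (T : X → X) (μ : Measure X) (ε δ : ℝ) : ℝ≥0∞ :=
  liminf (fun n => ENNReal.ofReal (Real.log (katokCovNum T μ n ε δ)) / n) atTop

/-- Upper Katok `ε`-entropy: the limit of `katokUpperδ` as `δ → 0`. -/
noncomputable def katokUpper [MeasurableSpace X] (T : X → X) (μ : Measure X) (ε : ℝ) : ℝ≥0∞ :=
  ⨆ δ ∈ Set.Ioo (0 : ℝ) 1, katokUpperδ T μ ε δ

/-- Lower Katok `ε`-entropy: the limit of `katokLowerδ` as `δ → 0`. -/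
noncomputable def katokLower [MeasurableSpace X] (T : X → X) (μ : Measure X) (ε : ℝ) : ℝ≥0∞ :=
  ⨆ δ ∈ Set.Ioo (0 : ℝ) 1, katokLowerδ T μ ε δ

/-- `-log μ(S)`, as an extended nonnegative real (`∞` when `μ S = 0`). -/
noncomputable def negLogMeas [MeasurableSpace X] (μ : Measure X) (S : Set X) : ℝ≥0∞ :=
  if μ S = 0 then ⊤ else ENNReal.ofReal (-Real.log (μ S).toReal)

/-- Upper Brin–Katok local `ε`-entropy of `μ`. -/
noncomputable def bkUpper [MeasurableSpace X] (T : X → X) (μ : Measure X) (ε : ℝ) : ℝ≥0∞ :=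
  ∫⁻ x, limsup (fun n => negLogMeas μ (bowenBall T n x ε) / n) atTop ∂μ

/-- Lower Brin–Katok local `ε`-entropy of `μ`. -/
noncomputable def bkLower [MeasurableSpace X] (T : X → X) (μ : Measure X) (ε : ℝ) : ℝ≥0∞ :=
  ∫⁻ x, liminf (fun n => negLogMeas μ (bowenBall T n x ε) / n) atTop ∂μ

/-- `∑ e^{-s n_i}` over a family of (center, order) pairs. -/
noncomputable def weightSum (s : ℝ) (I : Set (X × ℕ)) : ℝ≥0∞ :=
  ∑' p : I, ENNReal.ofReal (Real.exp (-(s * ((p : X × ℕ).2 : ℝ))))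

/-- Carathéodory–Pesin Bowen pre-measure `M(T,d,Z,s,N,ε)`. -/
noncomputable def bowenPre (T : X → X) (Z : Set X) (s : ℝ) (N : ℕ) (ε : ℝ) : ℝ≥0∞ :=
  ⨅ (I : Set (X × ℕ)) (_ : I.Countable ∧ (∀ p ∈ I, N ≤ p.2) ∧
      Z ⊆ ⋃ p ∈ I, bowenBall T p.2 p.1 ε), weightSum s I

/-- `M(T,d,Z,s,ε) = lim_{N→∞} M(T,d,Z,s,N,ε)`. -/
noncomputable def bowenCP (T : X → X) (Z : Set X) (s : ℝ) (ε : ℝ) : ℝ≥0∞ :=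
  ⨆ N, bowenPre T Z s N ε

/-- Bowen `ε`-entropy of the subset `Z`: the critical value of `s ↦ M(T,d,Z,s,ε)`. -/
noncomputable def bowenEnt (T : X → X) (Z : Set X) (ε : ℝ) : ℝ≥0∞ :=
  sInf {a : ℝ≥0∞ | ∃ s : ℝ, 0 ≤ s ∧ a = ENNReal.ofReal s ∧ bowenCP T Z s ε = 0}

/-- Packing pre-measure `P(T,d,Z,s,N,ε)`: supremum of `∑ e^{-n_i s}` over pairwise disjoint
families of closed Bowen balls with centers in `Z` and orders `≥ N`. -/
noncomputable def packPre (T : X → X) (Z : Set X) (s : ℝ) (N : ℕ) (ε : ℝ) : ℝ≥0∞ :=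
  ⨆ (I : Set (X × ℕ)) (_ : I.Countable ∧ (∀ p ∈ I, N ≤ p.2 ∧ p.1 ∈ Z) ∧
      I.PairwiseDisjoint (fun p => bowenClosedBall T p.2 p.1 ε)), weightSum s I

/-- `P(T,d,Z,s,ε) = lim_{N→∞} P(T,d,Z,s,N,ε)`. -/
noncomputable def packCP (T : X → X) (Z : Set X) (s : ℝ) (ε : ℝ) : ℝ≥0∞ :=
  ⨅ N, packPre T Z s N ε

/-- `𝒫(T,d,Z,s,ε) = inf {∑_i P(T,d,Z_i,s,ε) : Z ⊆ ⋃ Z_i}`. -/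
noncomputable def packOuter (T : X → X) (Z : Set X) (s : ℝ) (ε : ℝ) : ℝ≥0∞ :=
  ⨅ (Zs : ℕ → Set X) (_ : Z ⊆ ⋃ i, Zs i), ∑' i, packCP T (Zs i) s ε

/-- Packing `ε`-entropy of the subset `Z`: critical value of `s ↦ 𝒫(T,d,Z,s,ε)`. -/
noncomputable def packEnt (T : X → X) (Z : Set X) (ε : ℝ) : ℝ≥0∞ :=
  sInf {a : ℝ≥0∞ | ∃ s : ℝ, 0 ≤ s ∧ a = ENNReal.ofReal s ∧ packOuter T Z s ε = 0}

/-- Packing topological entropy of a subset: `lim_{ε → 0} h_top^P(T,Z,d,ε)`. -/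
noncomputable def packEntTotal (T : X → X) (Z : Set X) : ℝ≥0∞ :=
  ⨆ (ε : ℝ) (_ : 0 < ε), packEnt T Z ε

/-- Katok-type Bowen pre-measure `M^δ(T,d,μ,s,N,ε)` for a measure `μ`. -/
noncomputable def bowenPreMeas [MeasurableSpace X] (T : X → X) (μ : Measure X) (s : ℝ)
    (N : ℕ) (ε δ : ℝ) : ℝ≥0∞ :=
  ⨅ (I : Set (X × ℕ)) (_ : I.Countable ∧ (∀ p ∈ I, N ≤ p.2) ∧
      1 - ENNReal.ofReal δ < μ (⋃ p ∈ I, bowenBall T p.2 p.1 ε)), weightSum s I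

/-- The critical value `M^δ(T,d,μ,ε)`. -/
noncomputable def bowenEntMeasδ [MeasurableSpace X] (T : X → X) (μ : Measure X)
    (ε δ : ℝ) : ℝ≥0∞ :=
  sInf {a : ℝ≥0∞ | ∃ s : ℝ, 0 ≤ s ∧ a = ENNReal.ofReal s ∧
    (⨆ N, bowenPreMeas T μ s N ε δ) = 0}

/-- `M_μ(T,d,ε) = lim_{δ → 0} M^δ(T,d,μ,ε)`. -/
noncomputable def bowenEntMeas [MeasurableSpace X] (T : X → X) (μ : Measure X) (ε : ℝ) : ℝ≥0∞ :=
  ⨆ δ ∈ Set.Ioo (0 : ℝ) 1, bowenEntMeasδ T μ ε δ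

/-- `𝒫^δ(T,d,μ,s,ε) = inf {∑_i P(T,d,Z_i,s,ε) : μ(⋃ Z_i) > 1 - δ}`. -/
noncomputable def packOuterMeas [MeasurableSpace X] (T : X → X) (μ : Measure X) (s : ℝ)
    (ε δ : ℝ) : ℝ≥0∞ :=
  ⨅ (Zs : ℕ → Set X) (_ : 1 - ENNReal.ofReal δ < μ (⋃ i, Zs i)), ∑' i, packCP T (Zs i) s ε

/-- The critical value `𝒫^δ(T,d,μ,ε)`. -/
noncomputable def packEntMeasδ [MeasurableSpace X] (T : X → X) (μ : Measure X)
    (ε δ : ℝ) : ℝ≥0∞ :=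
  sInf {a : ℝ≥0∞ | ∃ s : ℝ, 0 ≤ s ∧ a = ENNReal.ofReal s ∧ packOuterMeas T μ s ε δ = 0}

/-- `𝒫_μ(T,d,ε) = lim_{δ → 0} 𝒫^δ(T,d,μ,ε)`. -/
noncomputable def packEntMeas [MeasurableSpace X] (T : X → X) (μ : Measure X) (ε : ℝ) : ℝ≥0∞ :=
  ⨆ δ ∈ Set.Ioo (0 : ℝ) 1, packEntMeasδ T μ ε δ

/-- The `n`-th empirical measure `(1/n) ∑_{j=0}^{n-1} δ_{T^j x}`. -/
noncomputable def empMeas [MeasurableSpace X] (T : X → X) (x : X) (n : ℕ) : Measure X :=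
  (n : ℝ≥0∞)⁻¹ • ∑ j ∈ Finset.range n, Measure.dirac (T^[j] x)

set_option linter.unusedSectionVars false in
lemma empMeas_finite [MeasurableSpace X] (T : X → X) (x : X) (n : ℕ) :
    IsFiniteMeasure (empMeas T x n) := by
  refine ⟨?_⟩
  have h : (∑ j ∈ Finset.range n, Measure.dirac (T^[j] x)) Set.univ = n := by
    rw [Measure.finset_sum_apply]
    simp
  rw [empMeas, Measure.smul_apply, smul_eq_mul, h]
  rcases eq_or_ne (n : ℝ≥0∞) 0 with h0 | h0
  · simp [h0]
  · rw [ENNReal.inv_mul_cancel h0 (by simp)]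
    exact ENNReal.one_lt_top

/-- The `n`-th empirical measure as a finite measure. -/
noncomputable def empFM [MeasurableSpace X] (T : X → X) (x : X) (n : ℕ) : FiniteMeasure X :=
  ⟨empMeas T x n, empMeas_finite T x n⟩

/-- The set of generic points of `μ`: points whose empirical measures converge weakly to `μ`. -/
def genPts [MeasurableSpace X] [OpensMeasurableSpace X] (T : X → X) (μ : Measure X) [IsFiniteMeasure μ] : Set X :=
  {x | Tendsto (fun n => empFM T x n) atTop (𝓝 (⟨μ, ‹_›⟩ : FiniteMeasure X))}

/-- `X_{n,F}`: points whose `n`-th empirical measure lies in `F`. -/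
def XnF [MeasurableSpace X] [OpensMeasurableSpace X] (T : X → X) (F : Set (FiniteMeasure X)) (n : ℕ) : Set X :=
  {x | empFM T x n ∈ F}

/-- Pfister–Sullivan `ε`-entropy of `μ`. -/
noncomputable def psEnt [MeasurableSpace X] [OpensMeasurableSpace X] (T : X → X) (μ : Measure X) [IsFiniteMeasure μ]
    (ε : ℝ) : ℝ≥0∞ :=
  ⨅ (F : Set (FiniteMeasure X)) (_ : F ∈ @nhds (FiniteMeasure X) _ (⟨μ, ‹_›⟩ : FiniteMeasure X)),
    limsup (fun n => ENNReal.ofReal (Real.log (sepNum T n ε (XnF T F n)) / n)) atTop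

/-- `limsup_{ε → 0⁺} f(ε)/log(1/ε)`. -/
noncomputable def mmUpper (f : ℝ → ℝ≥0∞) : ℝ≥0∞ :=
  limsup (fun ε : ℝ => f ε / ENNReal.ofReal (Real.log (1 / ε))) (𝓝[>] (0 : ℝ))

/-- `liminf_{ε → 0⁺} f(ε)/log(1/ε)`. -/
noncomputable def mmLower (f : ℝ → ℝ≥0∞) : ℝ≥0∞ :=
  liminf (fun ε : ℝ => f ε / ENNReal.ofReal (Real.log (1 / ε))) (𝓝[>] (0 : ℝ))

/-- Bowen upper metric mean dimension of a subset. -/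
noncomputable def mdimBUpper (T : X → X) (Z : Set X) : ℝ≥0∞ :=
  mmUpper (fun ε => bowenEnt T Z ε)

/-- Packing upper metric mean dimension of a subset. -/
noncomputable def mdimPUpper (T : X → X) (Z : Set X) : ℝ≥0∞ :=
  mmUpper (fun ε => packEnt T Z ε)

/-- Packing lower metric mean dimension of a subset. -/
noncomputable def mdimPLower (T : X → X) (Z : Set X) : ℝ≥0∞ :=
  mmLower (fun ε => packEnt T Z ε)


/-! If `𝒫_μ(T, d, ε/10) < t`, then for every `δ` some `s < t` and sets `Z_i` with
`μ(⋃ Z_i) > 1 - δ` have `∑ P(T, d, Z_i, s, ε/10) < ∞`. A point of `Z_i` whose local entropy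
exceeds `t` has `μ(B_n(x, ε)) ≤ e^{-nt}` for infinitely many `n ≥ N`. A Vitali selection of pairwise
disjoint closed Bowen balls `B̄_n(x, ε/10)`, whose doubles cover these points, is an admissible
packing, so their measure is at most `e^{-N(t-s)} P(T, d, Z_i, s, N, ε/10) → 0`. Hence the local
entropy is `≤ t` almost everywhere. -/

lemma bowenDist_eq_coe_sup (T : X → X) (n : ℕ) (x y : X) :
    bowenDist T n x y = ((Finset.range n).sup fun j => nndist (T^[j] x) (T^[j] y) : NNReal) := by
  set f := fun j => nndist (T^[j] x) (T^[j] y)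
  have hle : ∀ j ∈ Finset.range n, dist (T^[j] x) (T^[j] y) ≤ ((Finset.range n).sup f : NNReal) :=
    fun j hj => NNReal.coe_le_coe.2 (Finset.le_sup (f := f) hj)
  unfold bowenDist
  refine le_antisymm (Real.iSup_le (fun j => Real.iSup_le (hle j) (NNReal.coe_nonneg _))
    (NNReal.coe_nonneg _)) ?_
  have hbdd : BddAbove (range fun j => ⨆ _ : j ∈ Finset.range n, dist (T^[j] x) (T^[j] y)) :=
    ⟨_, forall_mem_range.2 fun j => Real.iSup_le (hle j) (NNReal.coe_nonneg _)⟩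
  rcases (Finset.range n).eq_empty_or_nonempty with hn | hn
  · rw [hn, Finset.sup_empty]
    exact Real.iSup_nonneg fun j => Real.iSup_nonneg fun _ => dist_nonneg (x := T^[j] x)
  obtain ⟨j, hj, hsup⟩ := Finset.exists_mem_eq_sup _ hn f
  rw [hsup, coe_nndist]
  exact (le_ciSup (f := fun _ : j ∈ Finset.range n => dist (T^[j] x) (T^[j] y))
    (Set.finite_range _).bddAbove hj).trans (le_ciSup hbdd j)

lemma bowenDist_self (T : X → X) (n : ℕ) (x : X) : bowenDist T n x x = 0 := by
  simp [bowenDist_eq_coe_sup]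

lemma bowenDist_comm (T : X → X) (n : ℕ) (x y : X) : bowenDist T n x y = bowenDist T n y x := by
  simp only [bowenDist_eq_coe_sup, nndist_comm]

lemma bowenDist_triangle (T : X → X) (n : ℕ) (x y z : X) :
    bowenDist T n x z ≤ bowenDist T n x y + bowenDist T n y z := by
  simp only [bowenDist_eq_coe_sup, ← NNReal.coe_add, NNReal.coe_le_coe]
  exact Finset.sup_le fun j hj => (nndist_triangle _ (T^[j] y) _).trans <|
    add_le_add (Finset.le_sup (f := fun j => nndist (T^[j] x) (T^[j] y)) hj)
      (Finset.le_sup (f := fun j => nndist (T^[j] y) (T^[j] z)) hj)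

lemma bowenDist_mono (T : X → X) {m n : ℕ} (h : m ≤ n) (x y : X) :
    bowenDist T m x y ≤ bowenDist T n x y := by
  simp only [bowenDist_eq_coe_sup, NNReal.coe_le_coe]
  exact Finset.sup_mono (Finset.range_subset_range.2 h)

lemma continuous_bowenDist {T : X → X} (hT : Continuous T) (n : ℕ) :
    Continuous fun p : X × X => bowenDist T n p.1 p.2 := by
  simp only [bowenDist_eq_coe_sup]
  refine NNReal.continuous_coe.comp (Continuous.finset_sup_apply fun j _ => ?_)
  exact ((hT.iterate j).comp continuous_fst).nndist ((hT.iterate j).comp continuous_snd)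

lemma isOpen_bowenBall {T : X → X} (hT : Continuous T) (n : ℕ) (x : X) (r : ℝ) :
    IsOpen (bowenBall T n x r) :=
  isOpen_lt ((continuous_bowenDist hT n).comp (Continuous.prodMk_right x)) continuous_const

lemma mem_bowenBall_self {T : X → X} {r : ℝ} (hr : 0 < r) (n : ℕ) (x : X) :
    x ∈ bowenBall T n x r := by
  simpa [bowenBall, bowenDist_self] using hr

lemma mem_bowenClosedBall_self {T : X → X} {r : ℝ} (hr : 0 ≤ r) (n : ℕ) (x : X) :
    x ∈ bowenClosedBall T n x r := by
  simpa [bowenClosedBall, bowenDist_self] using hr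

lemma bowenBall_subset_interior_bowenClosedBall {T : X → X} (hT : Continuous T) (n : ℕ) (x : X)
    (r : ℝ) :
    bowenBall T n x r ⊆ interior (bowenClosedBall T n x r) :=
  interior_maximal (fun _ hy => le_of_lt (α := ℝ) hy) (isOpen_bowenBall hT n x r)

lemma exists_pairwiseDisjoint_bowenClosedBall_cover (T : X → X) (S : Set X) (ord : X → ℕ)
    {r : ℝ} (hr : 0 ≤ r) :
    ∃ J ⊆ S, J.PairwiseDisjoint (fun y => bowenClosedBall T (ord y) y r) ∧
      S ⊆ ⋃ y ∈ J, bowenClosedBall T (ord y) y (2 * r) := by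
  -- Vitali with radii `2⁻¹ ^ ord y` and factor `3 / 2 < 2`: the selected ball meeting the ball
  -- around `x` has order at most `ord x`.
  obtain ⟨J, hJS, hJ, hcover⟩ := Vitali.exists_disjoint_subfamily_covering_enlargement
    (fun y => bowenClosedBall T (ord y) y r) S (fun y => (2⁻¹ : ℝ) ^ ord y) (3 / 2)
    (by norm_num) (fun _ _ => by positivity) 1 (fun _ _ => pow_le_one₀ (by norm_num) (by norm_num))
    (fun y _ => ⟨y, mem_bowenClosedBall_self hr _ y⟩)
  refine ⟨J, hJS, hJ, fun x hx => ?_⟩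
  obtain ⟨y, hyJ, ⟨z, hzx, hzy⟩, hxy⟩ := hcover x hx
  have hord : ord y ≤ ord x := by
    by_contra! h
    have : (2⁻¹ : ℝ) ^ ord y ≤ 2⁻¹ ^ ord x * 2⁻¹ := by
      rw [← pow_succ]; exact pow_le_pow_of_le_one (by norm_num) (by norm_num) h
    have : 0 < (2⁻¹ : ℝ) ^ ord x := by positivity
    linarith
  refine mem_biUnion hyJ ?_
  calc bowenDist T (ord y) y x ≤ bowenDist T (ord y) y z + bowenDist T (ord y) z x :=
        bowenDist_triangle T _ y z x
    _ ≤ r + r := by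
        gcongr
        · exact hzy
        · rw [bowenDist_comm]; exact (bowenDist_mono T hord x z).trans hzx
    _ = 2 * r := by ring

lemma Set.PairwiseDisjoint.countable_of_bowenClosedBall [TopologicalSpace.SeparableSpace X]
    {T : X → X} (hT : Continuous T) {ord : X → ℕ} {r : ℝ} (hr : 0 < r) {J : Set X}
    (hJ : J.PairwiseDisjoint (fun y => bowenClosedBall T (ord y) y r)) : J.Countable :=
  hJ.countable_of_nonempty_interior fun y _ =>
    ⟨y, bowenBall_subset_interior_bowenClosedBall hT _ y r (mem_bowenBall_self hr _ y)⟩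

lemma packPre_antitone (T : X → X) (Z : Set X) (s : ℝ) (r : ℝ) :
    Antitone fun N => packPre T Z s N r :=
  fun _ _ h => iSup₂_le fun I hI => le_iSup₂_of_le I
    ⟨hI.1, fun p hp => ⟨h.trans (hI.2.1 p hp).1, (hI.2.1 p hp).2⟩, hI.2.2⟩ le_rfl

lemma tsum_le_packPre (T : X → X) {Z J : Set X} (s : ℝ) {N : ℕ} {ord : X → ℕ} {r : ℝ}
    (hJc : J.Countable) (hJZ : J ⊆ Z) (hN : ∀ y ∈ J, N ≤ ord y)
    (hJ : J.PairwiseDisjoint (fun y => bowenClosedBall T (ord y) y r)) :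
    ∑' y : J, ENNReal.ofReal (Real.exp (-(s * ord y))) ≤ packPre T Z s N r := by
  have hinj : InjOn (fun y => (y, ord y)) J := fun _ _ _ _ h => congrArg Prod.fst h
  rw [← tsum_image (fun p : X × ℕ => ENNReal.ofReal (Real.exp (-(s * p.2)))) hinj]
  refine le_iSup₂_of_le ((fun y => (y, ord y)) '' J) ⟨hJc.image _, ?_, ?_⟩ le_rfl
  · rintro _ ⟨y, hy, rfl⟩
    exact ⟨hN y hy, hJZ hy⟩
  · rintro _ ⟨y, hy, rfl⟩ _ ⟨z, hz, rfl⟩ hyz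
    exact hJ hy hz fun h => hyz (by rw [h])

lemma measure_le_exp_mul_packPre [TopologicalSpace.SeparableSpace X] [MeasurableSpace X]
    {T : X → X} (hT : Continuous T) (μ : Measure X) {r ε s t : ℝ} (hr : 0 < r) (hrε : 2 * r < ε)
    (hst : s ≤ t) (N : ℕ) {S Z : Set X} (hSZ : S ⊆ Z)
    (hS : ∀ x ∈ S, ∃ m, N ≤ m ∧ μ (bowenBall T m x ε) ≤ ENNReal.ofReal (Real.exp (-(m * t)))) :
    μ S ≤ ENNReal.ofReal (Real.exp (-(N * (t - s)))) * packPre T Z s N r := by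
  choose! ord hordN hordμ using hS
  obtain ⟨J, hJS, hJ, hcover⟩ := exists_pairwiseDisjoint_bowenClosedBall_cover T S ord hr.le
  have hJc : J.Countable := hJ.countable_of_bowenClosedBall hT hr
  have hball : ∀ y, bowenClosedBall T (ord y) y (2 * r) ⊆ bowenBall T (ord y) y ε :=
    fun _ _ hz => lt_of_le_of_lt (α := ℝ) hz hrε
  have hexp : ∀ y ∈ J, ENNReal.ofReal (Real.exp (-(ord y * t))) ≤
      ENNReal.ofReal (Real.exp (-(N * (t - s)))) * ENNReal.ofReal (Real.exp (-(s * ord y))) := by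
    intro y hy
    rw [← ENNReal.ofReal_mul (Real.exp_nonneg _), ← Real.exp_add]
    have hN : (N : ℝ) ≤ ord y := Nat.cast_le.2 (hordN y (hJS hy))
    gcongr
    nlinarith [mul_le_mul_of_nonneg_right hN (sub_nonneg.2 hst)]
  calc μ S ≤ μ (⋃ y ∈ J, bowenBall T (ord y) y ε) :=
        measure_mono (hcover.trans (iUnion₂_mono fun y _ => hball y))
    _ ≤ ∑' y : J, μ (bowenBall T (ord y) y ε) := measure_biUnion_le μ hJc _
    _ ≤ ∑' y : J, ENNReal.ofReal (Real.exp (-(N * (t - s)))) *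
          ENNReal.ofReal (Real.exp (-(s * ord y))) :=
        ENNReal.tsum_le_tsum fun y => (hordμ y (hJS y.2)).trans (hexp y y.2)
    _ = ENNReal.ofReal (Real.exp (-(N * (t - s)))) *
          ∑' y : J, ENNReal.ofReal (Real.exp (-(s * ord y))) := ENNReal.tsum_mul_left
    _ ≤ ENNReal.ofReal (Real.exp (-(N * (t - s)))) * packPre T Z s N r := by
        gcongr
        exact tsum_le_packPre T s hJc (hJS.trans hSZ) (fun y hy => hordN y (hJS hy)) hJ

noncomputable def bkLocalUpper [MeasurableSpace X] (T : X → X) (μ : Measure X) (ε : ℝ) (x : X) :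
    ℝ≥0∞ :=
  limsup (fun n => negLogMeas μ (bowenBall T n x ε) / n) atTop

lemma measure_le_exp_of_lt_negLogMeas_div {Ω : Type*} [MeasurableSpace Ω] {μ : Measure Ω}
    [IsFiniteMeasure μ] {S : Set Ω} {n : ℕ} (hn : n ≠ 0) {t : ℝ} (ht : 0 ≤ t)
    (h : ENNReal.ofReal t < negLogMeas μ S / n) : μ S ≤ ENNReal.ofReal (Real.exp (-(n * t))) := by
  by_cases h0 : μ S = 0
  · simp [h0]
  rw [negLogMeas, if_neg h0, ENNReal.lt_div_iff_mul_lt (Or.inl (by exact_mod_cast hn))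
    (Or.inl (natCast_ne_top n)), ← ofReal_natCast, ← ofReal_mul ht, ofReal_lt_ofReal_iff'] at h
  rw [← ofReal_toReal (measure_ne_top μ S)]
  refine ofReal_le_ofReal ?_
  calc (μ S).toReal = Real.exp (Real.log (μ S).toReal) :=
        (Real.exp_log (toReal_pos h0 (measure_ne_top μ S))).symm
    _ ≤ Real.exp (-(n * t)) := Real.exp_le_exp.2 (by linarith [h.1])

lemma frequently_measure_bowenBall_le [MeasurableSpace X] {T : X → X} {μ : Measure X}
    [IsFiniteMeasure μ] {ε t : ℝ} {x : X} (ht : 0 ≤ t)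
    (h : ENNReal.ofReal t < bkLocalUpper T μ ε x) :
    ∃ᶠ n : ℕ in atTop, μ (bowenBall T n x ε) ≤ ENNReal.ofReal (Real.exp (-(n * t))) :=
  ((frequently_lt_of_lt_limsup (by isBoundedDefault) h).and_eventually
    (eventually_ne_atTop 0)).mono fun _ hn => measure_le_exp_of_lt_negLogMeas_div hn.2 ht hn.1

lemma measure_setOf_lt_bkLocalUpper_inter_eq_zero [TopologicalSpace.SeparableSpace X]
    [MeasurableSpace X] {T : X → X} (hT : Continuous T) (μ : Measure X) [IsFiniteMeasure μ]
    {r ε s t : ℝ} (hr : 0 < r) (hrε : 2 * r < ε) (hs : 0 ≤ s) (hst : s < t) {Z : Set X}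
    (hZ : packCP T Z s r ≠ ⊤) :
    μ ({x | ENNReal.ofReal t < bkLocalUpper T μ ε x} ∩ Z) = 0 := by
  have hbound : ∀ N : ℕ, μ ({x | ENNReal.ofReal t < bkLocalUpper T μ ε x} ∩ Z) ≤
      ENNReal.ofReal (Real.exp (-(N * (t - s)))) * packPre T Z s N r := fun N =>
    measure_le_exp_mul_packPre hT μ hr hrε hst.le N inter_subset_right fun x hx =>
      ((frequently_measure_bowenBall_le (hs.trans hst.le) hx.1).and_eventually
        (eventually_ge_atTop N)).exists.imp fun _ hm => ⟨hm.2, hm.1⟩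
  obtain ⟨N₀, hN₀⟩ := iInf_lt_iff.mp hZ.lt_top
  have hexp : Tendsto (fun N : ℕ => ENNReal.ofReal (Real.exp (-(N * (t - s))))) atTop (𝓝 0) := by
    rw [← ENNReal.ofReal_zero]
    refine ENNReal.tendsto_ofReal (Real.tendsto_exp_atBot.comp
      (tendsto_neg_atTop_atBot.comp ?_))
    exact tendsto_natCast_atTop_atTop.atTop_mul_const (sub_pos.2 hst)
  have hlim := ENNReal.Tendsto.mul_const hexp (Or.inr hN₀.ne)
  rw [zero_mul] at hlim
  refine le_antisymm (ge_of_tendsto hlim ?_) zero_le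
  filter_upwards [eventually_ge_atTop N₀] with N hN
  exact (hbound N).trans (by gcongr; exact packPre_antitone T Z s r hN)

lemma measurable_measure_bowenBall [SecondCountableTopology X] [MeasurableSpace X]
    [OpensMeasurableSpace X] {T : X → X} (hT : Continuous T) (μ : Measure X) [SFinite μ]
    (n : ℕ) (ε : ℝ) : Measurable fun x => μ (bowenBall T n x ε) :=
  measurable_measure_prodMk_left
    (isOpen_lt (continuous_bowenDist hT n) continuous_const).measurableSet

lemma measurable_bkLocalUpper [SecondCountableTopology X] [MeasurableSpace X]
    [OpensMeasurableSpace X] {T : X → X} (hT : Continuous T) (μ : Measure X) [SFinite μ]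
    (ε : ℝ) : Measurable (bkLocalUpper T μ ε) := by
  have hg : Measurable fun a : ℝ≥0∞ => if a = 0 then ⊤ else ENNReal.ofReal (-Real.log a.toReal) :=
    Measurable.ite (measurableSet_singleton 0) measurable_const (by fun_prop)
  exact Measurable.limsup fun n => (hg.comp (measurable_measure_bowenBall hT μ n ε)).div_const _

lemma measure_setOf_lt_bkLocalUpper_le [SecondCountableTopology X] [MeasurableSpace X]
    [OpensMeasurableSpace X] {T : X → X} (hT : Continuous T) (μ : Measure X)
    [IsProbabilityMeasure μ] {r ε s t δ : ℝ} (hr : 0 < r) (hrε : 2 * r < ε) (hs : 0 ≤ s)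
    (hst : s < t) (hpack : packOuterMeas T μ s r δ = 0) :
    μ {x | ENNReal.ofReal t < bkLocalUpper T μ ε x} ≤ ENNReal.ofReal δ := by
  set A := {x | ENNReal.ofReal t < bkLocalUpper T μ ε x}
  have hA : MeasurableSet A := measurableSet_lt measurable_const (measurable_bkLocalUpper hT μ ε)
  obtain ⟨Zs, hZs, hsum⟩ : ∃ Zs : ℕ → Set X, 1 - ENNReal.ofReal δ < μ (⋃ i, Zs i) ∧
      ∑' i, packCP T (Zs i) s r < 1 := by
    have : packOuterMeas T μ s r δ < 1 := hpack ▸ zero_lt_one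
    simpa only [packOuterMeas, iInf_lt_iff, exists_prop] using this
  have hnull : μ ((⋃ i, Zs i) \ Aᶜ) = 0 := by
    rw [sdiff_compl, inter_comm, inter_iUnion]
    exact measure_iUnion_null fun i => measure_setOf_lt_bkLocalUpper_inter_eq_zero hT μ hr hrε hs
      hst (((ENNReal.le_tsum i).trans_lt hsum).trans_le le_top).ne
  have hlt : 1 - ENNReal.ofReal δ < 1 - μ A := by
    rw [← prob_compl_eq_one_sub hA]
    exact hZs.trans_le (measure_mono_ae (ae_le_set.2 hnull))
  by_contra! h
  exact hlt.not_ge (tsub_le_tsub_left h.le 1)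

lemma measure_setOf_lt_bkLocalUpper_eq_zero [SecondCountableTopology X] [MeasurableSpace X]
    [OpensMeasurableSpace X] {T : X → X} (hT : Continuous T) (μ : Measure X)
    [IsProbabilityMeasure μ] {r ε t : ℝ} (hr : 0 < r) (hrε : 2 * r < ε)
    (ht : packEntMeas T μ r < ENNReal.ofReal t) :
    μ {x | ENNReal.ofReal t < bkLocalUpper T μ ε x} = 0 := by
  refine le_antisymm (ENNReal.le_of_forall_pos_le_add fun η hη _ => ?_) zero_le
  have hδ : min (η : ℝ) 2⁻¹ ∈ Ioo (0 : ℝ) 1 :=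
    ⟨lt_min hη (by norm_num), (min_le_right _ _).trans_lt (by norm_num)⟩
  obtain ⟨_, ⟨s, hs, rfl, hpack⟩, hst⟩ := sInf_lt_iff.mp ((le_biSup _ hδ).trans_lt ht)
  calc μ {x | ENNReal.ofReal t < bkLocalUpper T μ ε x} ≤ ENNReal.ofReal (min (η : ℝ) 2⁻¹) :=
        measure_setOf_lt_bkLocalUpper_le hT μ hr hrε hs (ofReal_lt_ofReal_iff'.1 hst).1 hpack
    _ ≤ 0 + η := by rw [zero_add, ← ofReal_coe_nnreal]; exact ofReal_le_ofReal (min_le_left _ _)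

/-- `h̄_μ^{BK}(T, ε) ≤ 𝒫_μ(T, d, ε/10)` for any Borel probability measure. -/
theorem stmt_10 {X : Type*} [MetricSpace X] [CompactSpace X] [MeasurableSpace X] [BorelSpace X]
    (T : X → X) (hT : Continuous T) (μ : Measure X) [IsProbabilityMeasure μ]
    (ε : ℝ) (hε : 0 < ε) :
    bkUpper T μ ε ≤ packEntMeas T μ (ε / 10) := by
  refine le_of_forall_gt_imp_ge_of_dense fun c hc => ?_
  obtain ⟨t, -, hPt, htc⟩ := ENNReal.lt_iff_exists_real_btwn.mp hc
  have hnull :=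
    measure_setOf_lt_bkLocalUpper_eq_zero hT μ (ε := ε) (by positivity) (by linarith) hPt
  have hae : ∀ᵐ x ∂μ, bkLocalUpper T μ ε x ≤ ENNReal.ofReal t := by
    simpa only [ae_iff, not_le] using hnull
  calc bkUpper T μ ε ≤ ∫⁻ _, ENNReal.ofReal t ∂μ := lintegral_mono_ae hae
    _ = ENNReal.ofReal t := by simp
    _ ≤ c := htc.le
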